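/- arXiv:2107.11058 — 10 statements merged into one kernel-verified Lean document; each statement's English description precedes it below -/
import Mathlib

section
/- For every natural number r and every real number x, the telescoping identity 2g(x) + ∑_{j=1}^{r} g(2^j x) = {2^{r+1} x}* - 1_{{x}* > 1/2} holds, where 1_{{x}* > 1/2} equals 1 if {x}* > 1/2 and 0 otherwise. -/
/-! Both sides telescope once one knows that doubling acts on the upper fractional part by
`{2y}* = 2{y}* - 1_{{y}* > 1/2}`, while `g(y) = {y}* - 1_{{y}* > 1/2}`. Together these give
`g(y) = {2y}* - {y}*`, and `2g(x) = {2x}* - 1_{{x}* > 1/2}` starts the telescoping sum. -/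

noncomputable def sawtooth (x : ℝ) : ℝ := x + ⌊(1:ℝ)/2 - x⌋

noncomputable def upperFrac (x : ℝ) : ℝ := x - ⌈x⌉ + 1

lemma upperFrac_pos (x : ℝ) : 0 < upperFrac x := by
  have := Int.ceil_lt_add_one x
  unfold upperFrac
  linarith

lemma upperFrac_le_one (x : ℝ) : upperFrac x ≤ 1 := by
  have := Int.le_ceil x
  unfold upperFrac
  linarith

lemma upperFrac_eq_sub_of_mem_Ioc {y : ℝ} (n : ℤ) (h : y - n ∈ Set.Ioc 0 1) :
    upperFrac y = y - n := by
  have hceil : ⌈y⌉ = n + 1 := by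
    rw [Int.ceil_eq_iff]
    push_cast
    constructor <;> linarith [h.1, h.2]
  rw [upperFrac, hceil]
  push_cast
  ring

lemma upperFrac_two_mul (x : ℝ) :
    upperFrac (2 * x) = 2 * upperFrac x - (if upperFrac x > 1/2 then 1 else 0) := by
  have hpos := upperFrac_pos x
  have hle := upperFrac_le_one x
  have hx : x = upperFrac x + (⌈x⌉ - 1) := by unfold upperFrac; ring
  split_ifs with h
  · rw [upperFrac_eq_sub_of_mem_Ioc (2 * ⌈x⌉ - 1)] <;> push_cast
    · linarith
    · constructor <;> linarith
  · rw [upperFrac_eq_sub_of_mem_Ioc (2 * (⌈x⌉ - 1))] <;> push_cast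
    · linarith
    · constructor <;> linarith

lemma sawtooth_eq_upperFrac_sub (x : ℝ) :
    sawtooth x = upperFrac x - (if upperFrac x > 1/2 then 1 else 0) := by
  have h1 := Int.le_ceil x
  have h2 := Int.ceil_lt_add_one x
  unfold sawtooth upperFrac
  split_ifs with h
  · have hfloor : ⌊(1:ℝ)/2 - x⌋ = -⌈x⌉ := by
      rw [Int.floor_eq_iff]
      push_cast
      constructor <;> linarith
    rw [hfloor]
    push_cast
    ring
  · have hfloor : ⌊(1:ℝ)/2 - x⌋ = 1 - ⌈x⌉ := by
      rw [Int.floor_eq_iff]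
      push_cast
      constructor <;> linarith
    rw [hfloor]
    push_cast
    ring

lemma sawtooth_eq_upperFrac_two_mul_sub (x : ℝ) :
    sawtooth x = upperFrac (2 * x) - upperFrac x := by
  rw [sawtooth_eq_upperFrac_sub, upperFrac_two_mul]
  ring

lemma two_mul_sawtooth (x : ℝ) :
    2 * sawtooth x = upperFrac (2 * x) - (if upperFrac x > 1/2 then 1 else 0) := by
  rw [two_mul]
  nth_rw 1 [sawtooth_eq_upperFrac_two_mul_sub]
  rw [sawtooth_eq_upperFrac_sub]
  ring

theorem stmt_2 (r : ℕ) (x : ℝ) :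
    2 * sawtooth x + ∑ j ∈ Finset.Icc 1 r, sawtooth (2^j * x)
      = upperFrac (2^(r+1) * x) - (if upperFrac x > 1/2 then 1 else 0) := by
  induction r with
  | zero => simpa using two_mul_sawtooth x
  | succ n ih =>
    rw [Finset.sum_Icc_succ_top (by omega), ← add_assoc, ih,
      sawtooth_eq_upperFrac_two_mul_sub, ← mul_assoc, ← pow_succ']
    ring
end

section
/- For every natural number r and every real number x, 2g(x) + ∑_{j=1}^{r} g(2^j x) ≤ 1. -/
theorem ceil_two_mul_eq_or {α : Type*} [Ring α] [LinearOrder α] [IsStrictOrderedRing α]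
    [FloorRing α] (y : α) : ⌈2 * y⌉ = 2 * ⌈y⌉ ∨ ⌈2 * y⌉ = 2 * ⌈y⌉ - 1 := by
  have hle := Int.ceil_add_le y y
  have hge := Int.ceil_add_ceil_le y y
  simp only [← two_mul] at hle hge
  omega

theorem sawtooth_eq_add_ceil_sub_ceil_two_mul (y : ℝ) :
    sawtooth y = y + ⌈y⌉ - ⌈2 * y⌉ := by
  have hfloor : ⌊(1:ℝ)/2 - y⌋ = ⌈y⌉ - ⌈2 * y⌉ := by
    have := Int.ceil_lt_add_one y
    have := Int.le_ceil y
    have := Int.ceil_lt_add_one (2 * y)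
    have := Int.le_ceil (2 * y)
    rw [Int.floor_eq_iff]
    push_cast
    have h : (⌈2 * y⌉ : ℝ) = 2 * ⌈y⌉ ∨ (⌈2 * y⌉ : ℝ) = 2 * ⌈y⌉ - 1 := by
      exact_mod_cast ceil_two_mul_eq_or y
    rcases h with h | h <;> constructor <;> linarith
  rw [sawtooth, hfloor]
  push_cast
  ring

theorem sum_Icc_sawtooth_two_pow_mul (r : ℕ) (x : ℝ) :
    ∑ j ∈ Finset.Icc 1 r, sawtooth (2 ^ j * x)
      = (2 ^ (r + 1) - 2) * x + ⌈2 * x⌉ - ⌈2 ^ (r + 1) * x⌉ := by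
  induction r with
  | zero => simp
  | succ r ih =>
    rw [Finset.sum_Icc_succ_top (by omega), ih, sawtooth_eq_add_ceil_sub_ceil_two_mul,
      ← mul_assoc, ← pow_succ']
    ring

theorem stmt_3 (r : ℕ) (x : ℝ) :
    2 * sawtooth x + ∑ j ∈ Finset.Icc 1 r, sawtooth (2^j * x) ≤ 1 := by
  have hhead : 2 * (⌈x⌉ : ℝ) - ⌈2 * x⌉ ≤ 1 := by
    have := ceil_two_mul_eq_or x
    exact_mod_cast (by omega : 2 * ⌈x⌉ - ⌈2 * x⌉ ≤ 1)
  have htail := Int.le_ceil (2 ^ (r + 1) * x)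
  rw [sum_Icc_sawtooth_two_pow_mul, sawtooth_eq_add_ceil_sub_ceil_two_mul]
  linarith
end

section
/- Let r be a natural number and m = 2^r. For every Borel probability measure μ on ℝ, min_{1 ≤ k ≤ m} E_μ[g(kx)] ≤ 1/(r+2), where E_μ[g(kx)] = ∫ g(kx) dμ(x). -/
/-!
Let `ψ(x) = [g(x) > 0] - g(x)`, so `0 ≤ ψ` and `g + ψ ≤ 1`. A three-case check on `g(x)` shows
`g(x) ≤ ψ(x) - ψ(2x)`, hence `∑_{j ≤ r} g(2^j x)` telescopes to at most `ψ(x) ≤ 1 - g(x)`.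
Integrating `g(x) + ∑_{j ≤ r} g(2^j x) ≤ 1` against `μ` gives `r + 2` integrals of the form
`E_μ[g(kx)]` with `k = 2^j ≤ 2^r` whose sum is at most `1`, so one of them is at most `1/(r+2)`.
-/

open MeasureTheory

lemma sawtooth_eq_sub_of_mem_Ioc (y : ℝ) (n : ℤ) (h : y - n ∈ Set.Ioc (-(1 / 2)) (1 / 2)) :
    sawtooth y = y - n := by
  have : ⌊(1 : ℝ) / 2 - y⌋ = -n := by
    rw [Int.floor_eq_iff]
    push_cast
    constructor <;> linarith [h.1, h.2]
  rw [sawtooth, this]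
  push_cast
  ring

lemma sawtooth_le_half (x : ℝ) : sawtooth x ≤ 1 / 2 := by
  have := Int.floor_le ((1 : ℝ) / 2 - x)
  rw [sawtooth]
  linarith

lemma neg_half_lt_sawtooth (x : ℝ) : -(1 / 2) < sawtooth x := by
  have := Int.lt_floor_add_one ((1 : ℝ) / 2 - x)
  rw [sawtooth]
  linarith

lemma sawtooth_add_intCast (y : ℝ) (n : ℤ) : sawtooth (y + n) = sawtooth y := by
  rw [sawtooth, sawtooth, show (1 : ℝ) / 2 - (y + n) = (1 / 2 - y) - n by ring,
    Int.floor_sub_intCast]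
  push_cast
  ring

lemma sawtooth_two_mul (x : ℝ) : sawtooth (2 * x) = sawtooth (2 * sawtooth x) := by
  have : 2 * x = 2 * sawtooth x + ((-2 * ⌊(1 : ℝ) / 2 - x⌋ : ℤ) : ℝ) := by
    rw [sawtooth]
    push_cast
    ring
  rw [this, sawtooth_add_intCast]

lemma measurable_sawtooth : Measurable sawtooth :=
  measurable_id.add (measurable_from_top.comp (measurable_const.sub measurable_id).floor)

lemma integrable_sawtooth_comp {α : Type*} [MeasurableSpace α] {μ : Measure α}
    [IsFiniteMeasure μ] {f : α → ℝ} (hf : Measurable f) :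
    Integrable (fun a => sawtooth (f a)) μ := by
  refine (integrable_const (1 / 2 : ℝ)).mono' (measurable_sawtooth.comp hf).aestronglyMeasurable
    (ae_of_all _ fun a => ?_)
  rw [Real.norm_eq_abs, abs_le]
  exact ⟨(neg_half_lt_sawtooth _).le, sawtooth_le_half _⟩

noncomputable def sawtoothPotential (x : ℝ) : ℝ := (if 0 < sawtooth x then 1 else 0) - sawtooth x

lemma sawtoothPotential_nonneg (x : ℝ) : 0 ≤ sawtoothPotential x := by
  have := sawtooth_le_half x
  rw [sawtoothPotential]
  split_ifs <;> linarith

lemma sawtooth_add_sawtoothPotential_le_one (x : ℝ) : sawtooth x + sawtoothPotential x ≤ 1 := by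
  rw [sawtoothPotential]
  split_ifs <;> linarith

lemma sawtooth_le_sawtoothPotential_sub (x : ℝ) :
    sawtooth x ≤ sawtoothPotential x - sawtoothPotential (2 * x) := by
  have h₁ := neg_half_lt_sawtooth x
  have h₂ := sawtooth_le_half x
  rw [sawtoothPotential, sawtoothPotential, sawtooth_two_mul]
  set t := sawtooth x
  rcases le_or_gt t (-(1 / 4)) with ht | ht
  · rw [sawtooth_eq_sub_of_mem_Ioc (2 * t) (-1) ⟨by push_cast; linarith, by push_cast; linarith⟩]
    push_cast
    split_ifs <;> linarith
  rcases le_or_gt t (1 / 4) with ht' | ht'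
  · rw [sawtooth_eq_sub_of_mem_Ioc (2 * t) 0 ⟨by push_cast; linarith, by push_cast; linarith⟩]
    push_cast
    split_ifs <;> linarith
  · rw [sawtooth_eq_sub_of_mem_Ioc (2 * t) 1 ⟨by push_cast; linarith, by push_cast; linarith⟩]
    push_cast
    split_ifs <;> linarith

lemma sawtooth_add_sum_sawtooth_two_pow_mul_le_one (n : ℕ) (x : ℝ) :
    sawtooth x + ∑ j ∈ Finset.range n, sawtooth (2 ^ j * x) ≤ 1 := by
  have hsum : ∑ j ∈ Finset.range n, sawtooth (2 ^ j * x) ≤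
      sawtoothPotential x - sawtoothPotential (2 ^ n * x) := by
    calc ∑ j ∈ Finset.range n, sawtooth (2 ^ j * x)
        ≤ ∑ j ∈ Finset.range n,
            (sawtoothPotential (2 ^ j * x) - sawtoothPotential (2 ^ (j + 1) * x)) := by
          refine Finset.sum_le_sum fun j _ => ?_
          rw [pow_succ, mul_comm _ (2 : ℝ), mul_assoc]
          exact sawtooth_le_sawtoothPotential_sub _
      _ = sawtoothPotential x - sawtoothPotential (2 ^ n * x) := by
          rw [Finset.sum_range_sub', pow_zero, one_mul]
  linarith [sawtoothPotential_nonneg (2 ^ n * x), sawtooth_add_sawtoothPotential_le_one x]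

lemma integral_sawtooth_add_sum_integral_sawtooth_two_pow_mul_le_one (μ : Measure ℝ)
    [IsProbabilityMeasure μ] (n : ℕ) :
    ∫ x, sawtooth x ∂μ + ∑ j ∈ Finset.range n, ∫ x, sawtooth (2 ^ j * x) ∂μ ≤ 1 := by
  have hint : ∀ j, Integrable (fun x => sawtooth (2 ^ j * x)) μ := fun j =>
    integrable_sawtooth_comp (measurable_const.mul measurable_id)
  have hint₀ : Integrable sawtooth μ := integrable_sawtooth_comp (f := fun x => x) measurable_id
  have hintSum := integrable_finsetSum (Finset.range n) fun j _ => hint j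
  rw [← integral_finsetSum _ fun j _ => hint j, ← integral_add hint₀ hintSum]
  calc _ ≤ ∫ _, (1 : ℝ) ∂μ := integral_mono (hint₀.add hintSum) (integrable_const 1)
        (sawtooth_add_sum_sawtooth_two_pow_mul_le_one n)
    _ = 1 := by simp

lemma exists_le_one_div_of_add_sum_range_le_one (a : ℕ → ℝ) (n : ℕ)
    (h : a 0 + ∑ j ∈ Finset.range (n + 1), a j ≤ 1) : ∃ j ≤ n, a j ≤ 1 / (n + 2) := by
  by_contra! hlt
  have hsum : ∑ _j ∈ Finset.range (n + 1), 1 / ((n : ℝ) + 2) < ∑ j ∈ Finset.range (n + 1), a j :=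
    Finset.sum_lt_sum_of_nonempty Finset.nonempty_range_add_one
      fun j hj => hlt j (Nat.lt_succ_iff.mp (Finset.mem_range.mp hj))
  rw [Finset.sum_const, Finset.card_range, nsmul_eq_mul] at hsum
  have : ((n + 1 : ℕ) : ℝ) * (1 / (n + 2)) + 1 / (n + 2) = 1 := by
    field_simp
    push_cast
    ring
  linarith [hlt 0 n.zero_le]

theorem stmt_4 (r : ℕ) (m : ℕ) (hm : m = 2^r)
    (μ : Measure ℝ) [IsProbabilityMeasure μ] :
    ∃ k : ℕ, 1 ≤ k ∧ k ≤ m ∧ (∫ x, sawtooth (k * x) ∂μ) ≤ 1 / (r + 2) := by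
  obtain ⟨j, hjr, hj⟩ := exists_le_one_div_of_add_sum_range_le_one
    (fun j => ∫ x, sawtooth (2 ^ j * x) ∂μ) r
    (by simpa using integral_sawtooth_add_sum_integral_sawtooth_two_pow_mul_le_one μ (r + 1))
  refine ⟨2 ^ j, Nat.one_le_two_pow, hm ▸ Nat.pow_le_pow_right two_pos hjr, ?_⟩
  simpa using hj
end

section
/- Let r be a natural number and m = 2^r. For every integer k with 1 ≤ k ≤ m, ∑_{j=1}^{r} g(k/2^j) + 2 g(k/2^{r+1}) = 1. -/
/-!
Hermite's identity `⌊y⌋ + ⌊y + 1/2⌋ = ⌊2y⌋` turns the sawtooth into a difference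
`g x = φ x - φ (2x)` with `φ x = fract (-x)`, so the sum over `j` telescopes to
`φ (k / 2^r) - φ k = φ (k / 2^r)`. For `0 < x ≤ 1` one has `φ x = 1 - x` and `φ (x/2) = 1 - x/2`,
hence the total is `φ x + 2 (φ (x/2) - φ x) = 2 (1 - x/2) - (1 - x) = 1` with `x = k / 2^r`.
-/

namespace Int

variable {α : Type*} [Field α] [LinearOrder α] [IsStrictOrderedRing α] [FloorRing α]

theorem floor_add_floor_add_half (y : α) : ⌊y⌋ + ⌊y + 1 / 2⌋ = ⌊2 * y⌋ := by
  have hle := Int.floor_le y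
  have hlt := Int.lt_floor_add_one y
  rcases lt_or_ge (y - ⌊y⌋) (1 / 2) with h | h
  · have e₁ : ⌊y + 1 / 2⌋ = ⌊y⌋ := by
      rw [Int.floor_eq_iff]; constructor <;> linarith
    have e₂ : ⌊2 * y⌋ = 2 * ⌊y⌋ := by
      rw [Int.floor_eq_iff]; push_cast; constructor <;> linarith
    omega
  · have e₁ : ⌊y + 1 / 2⌋ = ⌊y⌋ + 1 := by
      rw [Int.floor_eq_iff]; push_cast; constructor <;> linarith
    have e₂ : ⌊2 * y⌋ = 2 * ⌊y⌋ + 1 := by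
      rw [Int.floor_eq_iff]; push_cast; constructor <;> linarith
    omega

theorem fract_neg_eq_one_sub {x : α} (hx₀ : 0 < x) (hx₁ : x ≤ 1) : fract (-x) = 1 - x := by
  rw [Int.fract_eq_iff]
  exact ⟨by linarith, by linarith, -1, by push_cast; ring⟩

end Int

theorem sawtooth_eq_fract_neg_sub (x : ℝ) :
    sawtooth x = Int.fract (-x) - Int.fract (-(2 * x)) := by
  have hermite := Int.floor_add_floor_add_half (-x)
  rw [neg_add_eq_sub, ← neg_mul_eq_mul_neg] at hermite
  unfold sawtooth Int.fract
  rw [← hermite]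
  push_cast
  ring

theorem sum_sawtooth_div_two_pow (x : ℝ) (r : ℕ) :
    ∑ j ∈ Finset.Icc 1 r, sawtooth (x / 2 ^ j) = Int.fract (-(x / 2 ^ r)) - Int.fract (-x) := by
  induction r with
  | zero => simp
  | succ r ih =>
    rw [Finset.sum_Icc_succ_top (by omega), ih, sawtooth_eq_fract_neg_sub,
      show 2 * (x / 2 ^ (r + 1)) = x / 2 ^ r by ring]
    ring

theorem stmt_5 (r : ℕ) (m : ℕ) (hm : m = 2^r) (k : ℕ) (hk1 : 1 ≤ k) (hkm : k ≤ m) :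
    ∑ j ∈ Finset.Icc 1 r, sawtooth ((k : ℝ) / 2^j) + 2 * sawtooth ((k : ℝ) / 2^(r+1)) = 1 := by
  subst hm
  set x : ℝ := k / 2 ^ r with hx
  have hx₀ : 0 < x := div_pos (by exact_mod_cast hk1) (by positivity)
  have hx₁ : x ≤ 1 := by
    rw [hx, div_le_one (by positivity)]
    exact_mod_cast hkm
  have half : (k : ℝ) / 2 ^ (r + 1) = x / 2 := by rw [hx, pow_succ, div_div]
  have hk : Int.fract (-(k : ℝ)) = 0 := by simp
  rw [sum_sawtooth_div_two_pow, half, sawtooth_eq_fract_neg_sub, mul_div_cancel₀ x two_ne_zero, hk,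
    Int.fract_neg_eq_one_sub hx₀ hx₁, Int.fract_neg_eq_one_sub (by positivity) (by linarith)]
  ring
end

section
/- For every probability measure μ on ℝ and every integer m ≥ 2, there exists a positive integer k ≤ m such that E_μ[g(kx)] ≤ (log 2)/(log m). -/
/-!
The sawtooth is a coboundary for the doubling map: `sawtooth x = h x - h (2 x)` with
`h x = fract (-x) ∈ [0, 1)`. Hence the expectations of `sawtooth (2 ^ j x)`, `j < n`, telescope to
a sum of at most `1`, so one of them is at most `1 / n`. Taking `n = ⌊log₂ m⌋ + 1` keeps `2 ^ j ≤ m`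
and gives `1 / n ≤ log 2 / log m`.
-/

open MeasureTheory

open Int

lemma sawtooth_eq_fract_neg_sub_fract_neg_two_mul (x : ℝ) :
    sawtooth x = fract (-x) - fract (-(2 * x)) := by
  have hle := floor_le (-x)
  have hlt := lt_floor_add_one (-x)
  set n := ⌊-x⌋
  rcases lt_or_ge (-x) (n + 1 / 2) with h | h
  · have h1 : ⌊(1:ℝ) / 2 - x⌋ = n := floor_eq_iff.mpr ⟨by linarith, by linarith⟩
    have h2 : ⌊-(2 * x)⌋ = 2 * n :=
      floor_eq_iff.mpr ⟨by push_cast; linarith, by push_cast; linarith⟩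
    rw [sawtooth, fract, fract, h1, h2]
    push_cast
    ring
  · have h1 : ⌊(1:ℝ) / 2 - x⌋ = n + 1 :=
      floor_eq_iff.mpr ⟨by push_cast; linarith, by push_cast; linarith⟩
    have h2 : ⌊-(2 * x)⌋ = 2 * n + 1 :=
      floor_eq_iff.mpr ⟨by push_cast; linarith, by push_cast; linarith⟩
    rw [sawtooth, fract, fract, h1, h2]
    push_cast
    ring

lemma integrable_fract_neg_mul (μ : Measure ℝ) [IsFiniteMeasure μ] (c : ℝ) :
    Integrable (fun x => fract (-(c * x))) μ :=
  .of_bound (by fun_prop : Measurable fun x : ℝ => fract (-(c * x))).aestronglyMeasurable 1 <|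
    ae_of_all _ fun x => by
      rw [Real.norm_of_nonneg (fract_nonneg _)]
      exact (fract_lt_one _).le

lemma integral_sawtooth_mul (μ : Measure ℝ) [IsFiniteMeasure μ] (c : ℝ) :
    ∫ x, sawtooth (c * x) ∂μ =
      ∫ x, fract (-(c * x)) ∂μ - ∫ x, fract (-(2 * c * x)) ∂μ := by
  rw [← integral_sub (integrable_fract_neg_mul μ c) (integrable_fract_neg_mul μ (2 * c))]
  simp_rw [sawtooth_eq_fract_neg_sub_fract_neg_two_mul, mul_assoc]

lemma integral_fract_le_one {α : Type*} [MeasurableSpace α] (μ : Measure α)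
    [IsProbabilityMeasure μ] (f : α → ℝ) :
    ∫ x, fract (f x) ∂μ ≤ 1 := by
  simpa using integral_mono_of_nonneg (ae_of_all _ fun x => fract_nonneg (f x))
    (integrable_const (μ := μ) (1 : ℝ)) (ae_of_all _ fun x => (fract_lt_one (f x)).le)

lemma exists_sub_succ_le_div (F : ℕ → ℝ) {n : ℕ} (hn : n ≠ 0) :
    ∃ j < n, F j - F (j + 1) ≤ (F 0 - F n) / n := by
  have hsum : ∑ j ∈ Finset.range n, (F j - F (j + 1)) ≤
      ∑ _j ∈ Finset.range n, (F 0 - F n) / n := by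
    rw [Finset.sum_range_sub', Finset.sum_const, Finset.card_range, nsmul_eq_mul,
      mul_div_cancel₀ _ (by exact_mod_cast hn)]
  simpa using Finset.exists_le_of_sum_le (by simpa using hn) hsum

lemma one_div_log_succ_le_log_div_log {b m : ℕ} (hb : 1 < b) (hm : 1 < m) :
    1 / (Nat.log b m + 1 : ℝ) ≤ Real.log b / Real.log m := by
  have hbm : (m : ℝ) < (b : ℝ) ^ (Nat.log b m + 1) := by
    exact_mod_cast Nat.lt_pow_succ_log_self hb m
  have hlog : Real.log m ≤ (Nat.log b m + 1) * Real.log b := by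
    calc Real.log m ≤ Real.log ((b : ℝ) ^ (Nat.log b m + 1)) :=
          Real.log_le_log (by positivity) hbm.le
      _ = (Nat.log b m + 1) * Real.log b := by rw [Real.log_pow]; push_cast; ring
  rw [div_le_div_iff₀ (by positivity) (Real.log_pos (by exact_mod_cast hm))]
  linarith

theorem stmt_10 (m : ℕ) (hm : 2 ≤ m) (μ : Measure ℝ) [IsProbabilityMeasure μ] :
    ∃ k : ℕ, 1 ≤ k ∧ k ≤ m ∧
      (∫ x, sawtooth (k * x) ∂μ) ≤ Real.log 2 / Real.log m := by
  set r := Nat.log 2 m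
  set F : ℕ → ℝ := fun j => ∫ x, fract (-((2 : ℝ) ^ j * x)) ∂μ
  have hF0 : F 0 ≤ 1 := integral_fract_le_one μ _
  have hF : 0 ≤ F (r + 1) := integral_nonneg fun x => fract_nonneg _
  obtain ⟨j, hjr, hj⟩ := exists_sub_succ_le_div F r.add_one_ne_zero
  refine ⟨2 ^ j, Nat.one_le_two_pow, ?_, ?_⟩
  · exact (Nat.pow_le_pow_right two_pos (by omega)).trans (Nat.pow_log_le_self 2 (by omega))
  calc ∫ x, sawtooth (((2 ^ j : ℕ) : ℝ) * x) ∂μ = F j - F (j + 1) := by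
        rw [Nat.cast_pow, Nat.cast_ofNat, integral_sawtooth_mul]
        simp only [F, pow_succ']
    _ ≤ (F 0 - F (r + 1)) / (r + 1 : ℕ) := hj
    _ ≤ 1 / (r + 1 : ℕ) := by gcongr; linarith
    _ ≤ Real.log 2 / Real.log m := by
        exact_mod_cast one_div_log_succ_le_log_div_log one_lt_two (by omega)
end

section
/- Let m be a positive integer and ζ = e^{2πi/(2m+2)}. Define σ_m : ℤ/(2m+2) → ℤ by σ_m(k) = 1 for 1 ≤ k ≤ m, σ_m(k) = -1 for -m ≤ k ≤ -1, and σ_m(k) = 0 otherwise. Then the discrete Fourier transform σ̂_m(j) := (1/(2m+2)) ∑_{k=0}^{2m+1} σ_m(k) ζ^{-jk} equals (-i/(m+1)) · cot(πj/(2m+2)) for odd j and 0 for even j. -/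
/-!
Put w = ζ^(-j). Since the second half of the square wave is minus the first half shifted by m + 1,
the transform is (1 - w^(m+1)) (w + ⋯ + w^m) / (2m+2), and w^(m+1) = (-1)^j. For even j this
vanishes; for odd j the geometric sum equals (1 + w)/(1 - w), which is -i cot θ for w = e^(-2iθ).
-/

open Complex Real

def squareWave (m : ℕ) (k : ℤ) : ℤ :=
  if 1 ≤ k ∧ k ≤ m then 1 else if m + 2 ≤ k ∧ k ≤ 2 * m + 1 then -1 else 0

theorem sum_squareWave_mul_pow {R : Type*} [CommRing R] (m : ℕ) (w : R) :
    ∑ k ∈ Finset.range (2 * m + 2), (squareWave m k : R) * w ^ k =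
      (1 - w ^ (m + 1)) * ∑ k ∈ Finset.range m, w ^ (k + 1) := by
  have hup : ∀ k ∈ Finset.range m, (squareWave m ↑(k + 1) : R) * w ^ (k + 1) = w ^ (k + 1) := by
    intro k hk
    rw [Finset.mem_range] at hk
    rw [squareWave, if_pos (by omega)]
    simp
  have hdown : ∀ k ∈ Finset.range m,
      (squareWave m ↑(m + 1 + (k + 1)) : R) * w ^ (m + 1 + (k + 1)) =
        -(w ^ (m + 1) * w ^ (k + 1)) := by
    intro k hk
    rw [Finset.mem_range] at hk
    rw [squareWave, if_neg (by omega), if_pos (by omega), pow_add]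
    simp
  rw [show 2 * m + 2 = (m + 1) + (m + 1) by ring, Finset.sum_range_add, Finset.sum_range_succ',
    Finset.sum_range_succ', Finset.sum_congr rfl hup, Finset.sum_congr rfl hdown,
    Finset.sum_neg_distrib, ← Finset.mul_sum]
  have hzero : squareWave m ((0 : ℕ) : ℤ) = 0 := by
    rw [squareWave, if_neg (by omega), if_neg (by omega)]
  have hmid : squareWave m ((m + 1 + 0 : ℕ) : ℤ) = 0 := by
    rw [squareWave, if_neg (by omega), if_neg (by omega)]
  simp only [hzero, hmid, Int.cast_zero, zero_mul, add_zero]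
  ring

theorem geom_sum_succ_of_pow_eq_neg_one {K : Type*} [Field K] {m : ℕ} {w : K} (hw1 : w ≠ 1)
    (hw : w ^ (m + 1) = -1) :
    ∑ k ∈ Finset.range m, w ^ (k + 1) = (1 + w) / (1 - w) := by
  have h : (1 : K) - w ≠ 0 := sub_ne_zero.mpr hw1.symm
  simp_rw [pow_succ, ← Finset.sum_mul, geom_sum_eq hw1]
  rw [pow_succ] at hw
  field_simp
  linear_combination (1 - w) * hw

theorem Complex.cot_neg (z : ℂ) : cot (-z) = -cot z := by
  simp [Complex.cot, div_neg]

theorem one_add_exp_div_one_sub_exp (z : ℂ) :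
    (1 + exp (2 * I * -z)) / (1 - exp (2 * I * -z)) = -I * cot z := by
  rw [neg_mul, ← mul_neg, ← Complex.cot_neg, cot_eq_exp_ratio, add_comm, mul_div_assoc',
    mul_div_mul_left _ _ I_ne_zero]

theorem exp_two_pi_I_div_pow_half_eq_neg_one (m : ℕ) :
    exp (2 * π * I / (2 * m + 2)) ^ (m + 1) = -1 := by
  rw [← Complex.exp_nat_mul, ← exp_pi_mul_I]
  congr 1
  field_simp
  push_cast
  ring

theorem stmt_12_general (m : ℕ)
    (ζ : ℂ) (hζ : ζ = Complex.exp (2 * π * Complex.I / (2 * m + 2)))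
    (σ : ℤ → ℤ)
    (hσ : ∀ k : ℤ, 0 ≤ k → k ≤ 2 * m + 1 →
      σ k = if 1 ≤ k ∧ k ≤ m then 1 else if m + 2 ≤ k ∧ k ≤ 2 * m + 1 then -1 else 0)
    (j : ℤ) :
    (1 / (2 * (m : ℂ) + 2)) * ∑ k ∈ Finset.range (2 * m + 2), (σ k : ℂ) * ζ ^ (-(j * k)) =
      if Odd j then (-Complex.I / (m + 1)) * Real.cot (π * j / (2 * m + 2)) else 0 := by
  set w := ζ ^ (-j) with hw
  have hsum : ∑ k ∈ Finset.range (2 * m + 2), (σ k : ℂ) * ζ ^ (-(j * k)) =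
      ∑ k ∈ Finset.range (2 * m + 2), (squareWave m k : ℂ) * w ^ k := by
    refine Finset.sum_congr rfl fun k hk => ?_
    rw [Finset.mem_range] at hk
    rw [hσ k (by positivity) (by omega), ← neg_mul, zpow_mul, zpow_natCast]
    rfl
  have hwpow : w ^ (m + 1) = (-1) ^ (-j) := by
    rw [hw, ← zpow_natCast, ← zpow_mul, mul_comm, zpow_mul, zpow_natCast, hζ,
      exp_two_pi_I_div_pow_half_eq_neg_one]
  rw [hsum, sum_squareWave_mul_pow, hwpow]
  rcases Int.even_or_odd j with hj | hj
  · rw [if_neg (Int.not_odd_iff_even.mpr hj), hj.neg.neg_one_zpow]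
    simp
  · rw [hj.neg.neg_one_zpow] at hwpow ⊢
    have hw1 : w ≠ 1 := fun h => by norm_num [h] at hwpow
    have hwexp : w = exp (2 * I * -(π * j / (2 * m + 2) : ℝ)) := by
      rw [hw, hζ, ← Complex.exp_int_mul]
      congr 1
      push_cast
      ring
    rw [if_pos hj, geom_sum_succ_of_pow_eq_neg_one hw1 hwpow, hwexp,
      one_add_exp_div_one_sub_exp, ofReal_cot]
    field_simp
    ring

theorem stmt_12 (m : ℕ) (hm : 1 ≤ m)
    (ζ : ℂ) (hζ : ζ = Complex.exp (2 * π * Complex.I / (2 * m + 2)))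
    (σ : ℤ → ℤ)
    (hσ : ∀ k : ℤ, 0 ≤ k → k ≤ 2 * m + 1 →
      σ k = if 1 ≤ k ∧ k ≤ m then 1 else if m + 2 ≤ k ∧ k ≤ 2 * m + 1 then -1 else 0)
    (j : ℤ) :
    (1 / (2 * (m : ℂ) + 2)) * ∑ k ∈ Finset.range (2 * m + 2), (σ k : ℂ) * ζ ^ (-(j * k)) =
      if Odd j then (-Complex.I / (m + 1)) * Real.cot (π * j / (2 * m + 2)) else 0 :=
  stmt_12_general m ζ hζ σ hσ j
end

section
/- Let m be a positive integer. For every real number x, ∑_{1 ≤ k ≤ m, k odd} (2/(m+1)²) · cot(πk/(2m+2)) · [ (m+1-k)·sin(kx) + k·sin((m+1-k)x) ] ≤ 1. -/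
/-!
Put `N = m + 1` and `K(y) = |∑_{p<N} e^{ipy}|²`, which is `N` times the Fejér kernel. Writing `K` as
a cosine polynomial and summing `sin (d j π / N)` over odd `j` in closed form gives
`N² · (sum on the left) = ∑_{odd j ≤ m} (K (x - jπ/N) - K (x + jπ/N))`.
Since `K ≥ 0`, this is at most `∑_{l<N} K (x - (2l+1)π/N)`, which equals `N²`: averaging over the
`N`-point grid kills every frequency `p - q` with `0 < |p - q| < N`.
-/

open Real Finset

theorem sum_filter_odd_Icc {M : Type*} [AddCommMonoid M] (f : ℕ → M) (m : ℕ) :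
    ∑ j ∈ (Icc 1 m).filter Odd, f j = ∑ l ∈ range ((m + 1) / 2), f (2 * l + 1) := by
  refine sum_nbij' (fun j => j / 2) (fun l => 2 * l + 1) ?_ ?_ ?_ ?_ ?_ <;>
    intro j hj <;> simp only [mem_filter, mem_Icc, mem_range, Nat.odd_iff] at hj ⊢ <;>
    first | omega | (congr 1; omega)

theorem sum_Icc_reflect {M : Type*} [AddCommMonoid M] (f : ℕ → M) (m : ℕ) :
    ∑ d ∈ Icc 1 m, f (m + 1 - d) = ∑ d ∈ Icc 1 m, f d :=
  sum_nbij' (fun d => m + 1 - d) (fun d => m + 1 - d) (by intro d hd; simp at hd ⊢; omega)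
    (by intro d hd; simp at hd ⊢; omega) (by intro d hd; simp at hd ⊢; omega)
    (by intro d hd; simp at hd ⊢; omega) (fun _ _ => rfl)

theorem sum_range_sum_range_sub {h : ℝ → ℝ} (h_neg : ∀ t, h (-t) = h t) (h_zero : h 0 = 0)
    (n : ℕ) : ∑ p ∈ range n, ∑ q ∈ range n, h (p - q) = 2 * ∑ d ∈ range n, (n - d) * h d := by
  induction n with
  | zero => simp
  | succ n ih =>
    have reflect : ∑ q ∈ range n, h (n - q) = ∑ d ∈ range (n + 1), h d := by
      rw [sum_range_succ', Nat.cast_zero, h_zero, add_zero,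
        ← sum_range_reflect (fun d : ℕ => h (d + 1 : ℕ)) n]
      refine sum_congr rfl fun q hq => ?_
      rw [Nat.cast_add, Nat.cast_sub (by simp at hq; omega), Nat.cast_sub (by simp at hq; omega)]
      push_cast; ring_nf
    have column : ∑ p ∈ range n, h (p - n) = ∑ d ∈ range (n + 1), h d := by
      rw [← reflect]
      exact sum_congr rfl fun p _ => by rw [← h_neg, neg_sub]
    rw [sum_range_succ]
    simp only [sum_range_succ _ n, sum_add_distrib]
    rw [ih, column, reflect, sub_self, h_zero, sum_range_succ (fun d : ℕ => h d)]
    push_cast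
    simp only [add_sub_right_comm _ (1 : ℝ), add_mul, one_mul, sum_add_distrib]
    ring

theorem two_mul_sin_mul_sum_cos_sub (θ φ : ℝ) (M : ℕ) :
    2 * sin φ * ∑ l ∈ range M, cos (θ - (2 * l + 1) * φ) = sin θ - sin (θ - 2 * M * φ) := by
  induction M with
  | zero => simp
  | succ M ih =>
    have step : sin (θ - 2 * M * φ) - sin (θ - 2 * (M + 1) * φ)
        = 2 * sin φ * cos (θ - (2 * M + 1) * φ) := by
      rw [sin_sub_sin]; ring_nf
    rw [sum_range_succ, mul_add, ih, ← step]
    push_cast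
    ring

theorem sin_two_mul_mul_cot (x : ℝ) (hx : sin x ≠ 0) : sin (2 * x) * cot x = 2 * cos x ^ 2 := by
  rw [sin_two_mul, cot_eq_cos_div_sin]; field_simp

theorem sin_two_mul_mul_tan (x : ℝ) (hx : cos x ≠ 0) : sin (2 * x) * tan x = 2 * sin x ^ 2 := by
  rw [sin_two_mul, tan_eq_sin_div_cos]; field_simp

/-- `|∑_{p<n} e^{ipy}|²`. -/
noncomputable def expSumNormSq (n : ℕ) (y : ℝ) : ℝ :=
  (∑ p ∈ range n, cos (p * y)) ^ 2 + (∑ p ∈ range n, sin (p * y)) ^ 2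

theorem expSumNormSq_nonneg (n : ℕ) (y : ℝ) : 0 ≤ expSumNormSq n y := by
  unfold expSumNormSq; positivity

theorem expSumNormSq_eq_sum_cos (n : ℕ) (y : ℝ) :
    expSumNormSq n y = ∑ p ∈ range n, ∑ q ∈ range n, cos ((p - q) * y) := by
  simp only [expSumNormSq, sq, sum_mul_sum, ← sum_add_distrib, sub_mul, cos_sub]

theorem expSumNormSq_sub_sub_add (n : ℕ) (x a : ℝ) :
    expSumNormSq n (x - a) - expSumNormSq n (x + a)
      = 4 * ∑ d ∈ range n, (n - d) * (sin (d * x) * sin (d * a)) := by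
  have hcos (t : ℝ) : cos (t * (x - a)) - cos (t * (x + a)) = 2 * (sin (t * x) * sin (t * a)) := by
    rw [mul_sub, mul_add, cos_sub, cos_add]; ring
  simp only [expSumNormSq_eq_sum_cos, ← sum_sub_distrib, hcos]
  rw [sum_range_sum_range_sub (h := fun t => 2 * (sin (t * x) * sin (t * a)))
    (fun t => by simp only [neg_mul, sin_neg]; ring) (by simp), mul_sum, mul_sum]
  exact sum_congr rfl fun d _ => by ring

theorem sum_range_cos_mul_sub_odd_mul {n : ℕ} {k : ℤ} (hk : k ≠ 0) (hkn : |k| < n) (x : ℝ) :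
    ∑ l ∈ range n, cos (k * (x - (2 * l + 1) * π / n)) = 0 := by
  have hn : (0 : ℝ) < n := by exact_mod_cast (abs_nonneg k).trans_lt hkn
  have hlt : |k * π / n| < π := by
    have hkn' : |(k : ℝ)| < n := by exact_mod_cast hkn
    rw [abs_div, abs_mul, abs_of_pos pi_pos, abs_of_pos hn, div_lt_iff₀ hn]
    nlinarith [pi_pos]
  have hsin : sin (k * π / n) ≠ 0 := by
    rw [Ne, sin_eq_zero_iff_of_lt_of_lt (abs_lt.mp hlt).1 (abs_lt.mp hlt).2]
    simpa [hn.ne', pi_ne_zero] using hk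
  have htele := two_mul_sin_mul_sum_cos_sub (k * x) (k * π / n) n
  rw [show k * x - 2 * n * (k * π / n) = k * x - k * (2 * π) by field_simp,
    sin_sub_int_mul_two_pi, sub_self] at htele
  have hsum : ∑ l ∈ range n, cos (k * (x - (2 * l + 1) * π / n))
      = ∑ l ∈ range n, cos (k * x - (2 * l + 1) * (k * π / n)) :=
    sum_congr rfl fun l _ => by ring_nf
  rw [hsum]
  simpa [hsin] using htele

theorem sum_range_expSumNormSq_sub_odd_mul (n : ℕ) (x : ℝ) :
    ∑ l ∈ range n, expSumNormSq n (x - (2 * l + 1) * π / n) = (n : ℝ) ^ 2 := by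
  have hgrid : ∀ p ∈ range n, ∀ q ∈ range n,
      ∑ l ∈ range n, cos ((p - q) * (x - (2 * l + 1) * π / n)) = if p = q then (n : ℝ) else 0 := by
    intro p hp q hq
    split_ifs with hpq
    · simp [hpq]
    · have := sum_range_cos_mul_sub_odd_mul (n := n) (k := (p : ℤ) - q) (by omega)
        (by simp at hp hq; rw [abs_lt]; omega) x
      exact_mod_cast this
  simp_rw [expSumNormSq_eq_sum_cos]
  rw [sum_comm]
  rw [sum_congr rfl fun p hp => (sum_comm.trans (sum_congr rfl fun q hq => hgrid p hp q hq))]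
  simp only [sum_ite_eq, sum_ite_mem, inter_self, sum_const, card_range, nsmul_eq_mul, sq]

theorem two_mul_sum_odd_sin {m d : ℕ} (hd : d ∈ Icc 1 m) :
    2 * ∑ j ∈ (Icc 1 m).filter Odd, sin (d * (j * π / (m + 1)))
      = (if Odd d then cot (d * π / (2 * (m + 1))) else 0)
        + (if Odd (m + 1 - d) then tan (d * π / (2 * (m + 1))) else 0) := by
  rw [mem_Icc] at hd
  set ψ := d * π / (2 * (m + 1)) with hψ
  have hψ_pos : 0 < ψ := by
    have : (0 : ℝ) < d := by exact_mod_cast hd.1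
    positivity
  have hψ_lt : ψ < π / 2 := by
    rw [hψ, div_lt_div_iff₀ (by positivity) two_pos]
    have : (d : ℝ) < m + 1 := by exact_mod_cast Nat.lt_succ_of_le hd.2
    nlinarith [pi_pos]
  have hsin : sin ψ ≠ 0 := (sin_pos_of_pos_of_lt_pi hψ_pos (by linarith)).ne'
  have hcos : cos ψ ≠ 0 := (cos_pos_of_mem_Ioo ⟨by linarith, hψ_lt⟩).ne'
  have hsin2 : sin (2 * ψ) ≠ 0 := by rw [sin_two_mul]; simp [hsin, hcos]
  set r := (m + 1) % 2 with hr
  have hangle : π / 2 - 2 * ((m + 1) / 2 : ℕ) * (2 * ψ) = π / 2 - (d * π - r * (2 * ψ)) := by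
    have hdiv : (2 * ((m + 1) / 2 : ℕ) + r : ℝ) = m + 1 := by
      exact_mod_cast Nat.div_add_mod (m + 1) 2
    have hd : (m + 1) * (2 * ψ) = d * π := by rw [hψ]; field_simp
    linear_combination -(2 * ψ) * hdiv - hd
  have htele := two_mul_sin_mul_sum_cos_sub (π / 2) (2 * ψ) ((m + 1) / 2)
  rw [hangle, sin_pi_div_two, sin_pi_div_two_sub, cos_nat_mul_pi_sub] at htele
  simp only [cos_pi_div_two_sub] at htele
  rw [sum_filter_odd_Icc]
  -- after multiplying by `sin 2ψ`, `cot ψ` and `tan ψ` become `2 cos² ψ` and `2 sin² ψ`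
  refine mul_left_cancel₀ hsin2 ?_
  have hterm : ∀ l : ℕ, sin (d * ((2 * l + 1 : ℕ) * π / (m + 1))) = sin ((2 * l + 1) * (2 * ψ)) :=
    fun l => by rw [hψ]; push_cast; field_simp
  simp only [hterm]
  rw [← mul_assoc, mul_comm _ (2 : ℝ), htele, mul_add, mul_ite, mul_ite, mul_zero,
    sin_two_mul_mul_cot ψ hsin, sin_two_mul_mul_tan ψ hcos]
  have hpyth := sin_sq_add_cos_sq ψ
  rw [neg_one_pow_eq_pow_mod_two, hr]
  simp only [Nat.odd_iff]
  rcases Nat.mod_two_eq_zero_or_one d with hd2 | hd2 <;>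
  rcases Nat.mod_two_eq_zero_or_one (m + 1) with hm2 | hm2 <;>
  split_ifs <;> (try omega) <;>
  simp only [hd2, hm2, Nat.cast_zero, Nat.cast_one, zero_mul, one_mul, cos_zero, pow_zero, pow_one,
    cos_two_mul] <;>
  linarith

theorem sum_Icc_mul_cot_add_tan (m : ℕ) (x : ℝ) :
    ∑ d ∈ Icc 1 m, (m + 1 - d) * sin (d * x) *
        ((if Odd d then cot (d * π / (2 * (m + 1))) else 0)
          + (if Odd (m + 1 - d) then tan (d * π / (2 * (m + 1))) else 0))
      = ∑ k ∈ (Icc 1 m).filter Odd, cot (k * π / (2 * (m + 1))) *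
          ((m + 1 - k) * sin (k * x) + k * sin ((m + 1 - k) * x)) := by
  have hreflect : ∑ d ∈ Icc 1 m,
      (if Odd (m + 1 - d) then (m + 1 - d) * sin (d * x) * tan (d * π / (2 * (m + 1))) else 0)
        = ∑ k ∈ Icc 1 m, if Odd k then k * sin ((m + 1 - k) * x) * cot (k * π / (2 * (m + 1)))
            else 0 := by
    rw [← sum_Icc_reflect _ m]
    refine sum_congr rfl fun k hk => ?_
    have hkm : k ≤ m + 1 := by simp at hk; omega
    have hcast : ((m + 1 - k : ℕ) : ℝ) = m + 1 - k := by push_cast [Nat.cast_sub hkm]; ring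
    have harg : (m + 1 - k : ℝ) * π / (2 * (m + 1)) = π / 2 - k * π / (2 * (m + 1)) := by
      field_simp
    rw [Nat.sub_sub_self hkm, hcast, harg, tan_eq_sin_div_cos, cot_eq_cos_div_sin,
      sin_pi_div_two_sub, cos_pi_div_two_sub, sub_sub_cancel]
  calc _ = ∑ k ∈ Icc 1 m, (if Odd k then (m + 1 - k) * sin (k * x) * cot (k * π / (2 * (m + 1)))
              else 0)
          + ∑ d ∈ Icc 1 m, (if Odd (m + 1 - d) then
              (m + 1 - d) * sin (d * x) * tan (d * π / (2 * (m + 1))) else 0) := by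
        rw [← sum_add_distrib]
        exact sum_congr rfl fun k _ => by split_ifs <;> ring
    _ = _ := by
        rw [hreflect, ← sum_add_distrib, sum_filter]
        exact sum_congr rfl fun k _ => by split_ifs <;> ring

theorem sum_odd_expSumNormSq_sub (m : ℕ) (x : ℝ) :
    ∑ j ∈ (Icc 1 m).filter Odd,
        (expSumNormSq (m + 1) (x - j * π / (m + 1)) - expSumNormSq (m + 1) (x + j * π / (m + 1)))
      = 2 * ∑ k ∈ (Icc 1 m).filter Odd, cot (k * π / (2 * (m + 1))) *
          ((m + 1 - k) * sin (k * x) + k * sin ((m + 1 - k) * x)) := by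
  simp only [expSumNormSq_sub_sub_add, ← sum_Icc_mul_cot_add_tan]
  calc _ = 2 * ∑ d ∈ range (m + 1), (m + 1 - d) * sin (d * x) *
          (2 * ∑ j ∈ (Icc 1 m).filter Odd, sin (d * (j * π / (m + 1)))) := by
        rw [← mul_sum, sum_comm]
        push_cast
        simp only [mul_sum]
        exact sum_congr rfl fun d _ => sum_congr rfl fun j _ => by ring_nf
    _ = _ := by
      rw [sum_range_eq_add_Ico _ (by omega : 0 < m + 1), Ico_add_one_right_eq_Icc]
      simp only [Nat.cast_zero, zero_mul, sin_zero, mul_zero, zero_add]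
      exact congrArg _ (sum_congr rfl fun d hd => by rw [two_mul_sum_odd_sin hd])

theorem sum_odd_expSumNormSq_le (m : ℕ) (x : ℝ) :
    ∑ j ∈ (Icc 1 m).filter Odd, expSumNormSq (m + 1) (x - j * π / (m + 1)) ≤ ((m : ℝ) + 1) ^ 2 := by
  rw [sum_filter_odd_Icc]
  calc _ ≤ ∑ l ∈ range (m + 1), expSumNormSq (m + 1) (x - (2 * l + 1) * π / (m + 1)) := by
        push_cast
        exact sum_le_sum_of_subset_of_nonneg (range_subset_range.mpr (by omega))
          fun _ _ _ => expSumNormSq_nonneg _ _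
    _ = _ := by exact_mod_cast sum_range_expSumNormSq_sub_odd_mul (m + 1) x

theorem stmt_14_general (m : ℕ) (x : ℝ) :
    ∑ k ∈ (Finset.Icc 1 m).filter (fun k => Odd k),
        (2 / ((m : ℝ) + 1)^2) * Real.cot (π * k / (2 * m + 2)) *
          (((m : ℝ) + 1 - k) * Real.sin (k * x) + (k : ℝ) * Real.sin (((m : ℝ) + 1 - k) * x))
      ≤ 1 := by
  have hN : (0 : ℝ) < ((m : ℝ) + 1) ^ 2 := by positivity
  have hidentity := sum_odd_expSumNormSq_sub m x
  have hdrop : ∑ j ∈ (Icc 1 m).filter Odd,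
      (expSumNormSq (m + 1) (x - j * π / (m + 1)) - expSumNormSq (m + 1) (x + j * π / (m + 1)))
        ≤ ((m : ℝ) + 1) ^ 2 :=
    (sum_le_sum fun j _ => sub_le_self _ (expSumNormSq_nonneg _ _)).trans
      (sum_odd_expSumNormSq_le m x)
  simp only [← mul_sum, mul_assoc, show ∀ k : ℝ, π * k / (2 * m + 2) = k * π / (2 * (m + 1)) by
    intro k; ring]
  rw [div_mul_eq_mul_div, div_le_one hN]
  linarith

theorem stmt_14 (m : ℕ) (hm : 1 ≤ m) (x : ℝ) :
    ∑ k ∈ (Finset.Icc 1 m).filter (fun k => Odd k),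
        (2 / ((m : ℝ) + 1)^2) * Real.cot (π * k / (2 * m + 2)) *
          (((m : ℝ) + 1 - k) * Real.sin (k * x) + (k : ℝ) * Real.sin (((m : ℝ) + 1 - k) * x))
      ≤ 1 :=
  stmt_14_general m x
end

section
/- Let m be a positive integer and c_m := (2/(m+1)) ∑_{1 ≤ j ≤ m, j odd} cot(πj/(2m+2)). Let μ_m be the probability measure assigning mass (2/((m+1)c_m))·cot(πj/(2m+2)) to the point πj/(m+1) for each odd j with 1 ≤ j ≤ m. Then E_{μ_m}[sin(kx)] = 1/c_m for every integer 1 ≤ k ≤ m. -/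
open MeasureTheory Real Finset

/-! With `θ_j = πj/(2m+2)`, the identity
`cot θ (sin 2(k+1)θ - sin 2kθ) = cos 2(k+1)θ + cos 2kθ` reduces `∑_j cot θ_j sin 2kθ_j` to the
cosine sums `C_i = ∑_{j odd ≤ m} cos 2iθ_j`. Telescoping `2 sin a cos (2t+1)a` evaluates
`C_i = -(-1)^i ε / 2` for `1 ≤ i ≤ m`, where `ε = (m+1) mod 2`, while `C_0 = ⌊(m+1)/2⌋`.
Consecutive `C_i` cancel, so the weighted sum is `C_0 + C_1 = (m+1)/2` for every `1 ≤ k ≤ m`, and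
integrating `sin (k x)` against `μ_m` gives `2/((m+1) c_m) · (m+1)/2 = 1/c_m`. -/

lemma sum_filter_odd_Icc_eq_sum_range {M : Type*} [AddCommMonoid M] (m : ℕ) (g : ℕ → M) :
    ∑ j ∈ (Icc 1 m).filter Odd, g j = ∑ t ∈ range ((m + 1) / 2), g (2 * t + 1) := by
  symm
  refine sum_nbij' (fun t => 2 * t + 1) (fun j => (j - 1) / 2) ?_ ?_ ?_ ?_ ?_ <;>
    intro a ha <;> simp_all [Nat.odd_iff] <;> omega

lemma two_mul_sin_mul_sum_range_cos_odd_mul (a : ℝ) (n : ℕ) :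
    2 * sin a * ∑ t ∈ range n, cos ((2 * t + 1) * a) = sin (2 * n * a) := by
  induction n with
  | zero => simp
  | succ n ih =>
    rw [sum_range_succ, mul_add, ih, two_mul_sin_mul_cos,
      show a - (2 * n + 1) * a = -(2 * n * a) by ring,
      show a + (2 * n + 1) * a = 2 * (n + 1 : ℕ) * a by push_cast; ring, sin_neg]
    ring

lemma pi_mul_div_mem_Ioo {m j : ℕ} (hj : 0 < j) (hjm : j ≤ m) :
    π * j / (2 * m + 2) ∈ Set.Ioo 0 (π / 2) := by
  have hj' : (0 : ℝ) < j := by exact_mod_cast hj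
  have hjm' : (j : ℝ) < m + 1 := by exact_mod_cast Nat.lt_succ_of_le hjm
  constructor
  · positivity
  · rw [div_lt_div_iff₀ (by positivity) two_pos]
    nlinarith [pi_pos]

lemma cot_pos_of_mem_Ioo {x : ℝ} (hx : x ∈ Set.Ioo 0 (π / 2)) : 0 < cot x := by
  rw [cot_eq_cos_div_sin]
  exact div_pos (cos_pos_of_mem_Ioo ⟨by linarith [hx.1, pi_pos], hx.2⟩)
    (sin_pos_of_pos_of_lt_pi hx.1 (by linarith [hx.2, pi_pos]))

lemma sum_filter_odd_cos_two_mul {m i : ℕ} (hi : 0 < i) (him : i ≤ m) :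
    ∑ j ∈ (Icc 1 m).filter Odd, cos (2 * i * (π * j / (2 * m + 2)))
      = -(-1) ^ i * ((m + 1) % 2 : ℕ) / 2 := by
  set a := 2 * (π * i / (2 * m + 2)) with ha
  have hsin : sin a ≠ 0 := by
    have h := pi_mul_div_mem_Ioo hi him
    exact (sin_pos_of_pos_of_lt_pi (by linarith [h.1]) (by linarith [h.2])).ne'
  have hsum := two_mul_sin_mul_sum_range_cos_odd_mul a ((m + 1) / 2)
  have hmod : (2 * ((m + 1) / 2 : ℕ) : ℝ) = m + 1 - ((m + 1) % 2 : ℕ) := by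
    have := Nat.div_add_mod (m + 1) 2
    rw [eq_sub_iff_add_eq]; exact_mod_cast this
  have harg : 2 * ((m + 1) / 2 : ℕ) * a = i * π - ((m + 1) % 2 : ℕ) * a := by
    rw [hmod, sub_mul, ha]; field_simp
  have hε : sin (((m + 1) % 2 : ℕ) * a) = ((m + 1) % 2 : ℕ) * sin a := by
    rcases Nat.mod_two_eq_zero_or_one (m + 1) with h | h <;> simp [h]
  rw [harg, sin_nat_mul_pi_sub, hε] at hsum
  rw [sum_filter_odd_Icc_eq_sum_range]
  apply mul_left_cancel₀ (mul_ne_zero two_ne_zero hsin)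
  calc 2 * sin a * ∑ t ∈ range ((m + 1) / 2), cos (2 * i * (π * (2 * t + 1 : ℕ) / (2 * m + 2)))
      = 2 * sin a * ∑ t ∈ range ((m + 1) / 2), cos ((2 * t + 1) * a) := by
        congr 2; ext t; congr 1; rw [ha]; push_cast; ring
    _ = _ := by rw [hsum]; ring

lemma cot_mul_sin_two_mul_succ_sub {θ : ℝ} (h : sin θ ≠ 0) (k : ℕ) :
    cot θ * (sin (2 * (k + 1) * θ) - sin (2 * k * θ))
      = cos (2 * (k + 1) * θ) + cos (2 * k * θ) := by
  rw [sin_sub_sin, cos_add_cos, cot_eq_cos_div_sin,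
    show (2 * (k + 1) * θ - 2 * k * θ) / 2 = θ by ring]
  field_simp

lemma sum_filter_odd_cot_mul_sin {m k : ℕ} (hk : 0 < k) (hkm : k ≤ m) :
    ∑ j ∈ (Icc 1 m).filter Odd, cot (π * j / (2 * m + 2)) * sin (k * (π * j / (m + 1)))
      = (m + 1) / 2 := by
  set θ : ℕ → ℝ := fun j => π * j / (2 * m + 2) with hθ
  let F : ℕ → ℝ := fun k => ∑ j ∈ (Icc 1 m).filter Odd, cot (θ j) * sin (2 * k * θ j)
  let C : ℕ → ℝ := fun k => ∑ j ∈ (Icc 1 m).filter Odd, cos (2 * k * θ j)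
  have hF : ∀ k : ℕ, F (k + 1) = F k + (C (k + 1) + C k) := by
    intro k
    simp only [F, C, ← sum_add_distrib]
    refine sum_congr rfl fun j hj => ?_
    obtain ⟨hj1, hjm⟩ := mem_Icc.1 (mem_filter.1 hj).1
    have hθj := pi_mul_div_mem_Ioo hj1 hjm
    have hs : sin (θ j) ≠ 0 :=
      (sin_pos_of_pos_of_lt_pi hθj.1 (hθj.2.trans (half_lt_self pi_pos))).ne'
    push_cast
    linear_combination cot_mul_sin_two_mul_succ_sub hs k
  have hC : ∀ i, 0 < i → i ≤ m → C i = -(-1) ^ i * ((m + 1) % 2 : ℕ) / 2 :=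
    fun i hi him => sum_filter_odd_cos_two_mul hi him
  have hC0 : C 0 = ((m + 1) / 2 : ℕ) := by
    simp [C, sum_filter_odd_Icc_eq_sum_range]
  have hFk : F k = (m + 1) / 2 := by
    induction k, hk using Nat.le_induction with
    | base =>
      have hmod : (((m + 1) / 2 : ℕ) : ℝ) * 2 + ((m + 1) % 2 : ℕ) = m + 1 := by
        exact_mod_cast Nat.div_add_mod' (m + 1) 2
      rw [hF 0, hC 1 one_pos hkm, hC0]
      simp only [F, Nat.cast_zero, mul_zero, zero_mul, sin_zero, sum_const_zero]
      linear_combination hmod / 2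
    | succ k hk ih =>
      rw [hF, ih (by omega), hC (k + 1) (by omega) hkm, hC k hk (by omega), pow_succ]
      ring
  rw [← hFk]
  refine sum_congr rfl fun j _ => ?_
  congr 2
  simp only [hθ]
  field_simp

lemma integral_finset_sum_smul_dirac {ι α E : Type*} [MeasurableSpace α]
    [MeasurableSingletonClass α] [NormedAddCommGroup E] [NormedSpace ℝ E] [CompleteSpace E]
    (s : Finset ι) (w : ι → ℝ) (hw : ∀ i ∈ s, 0 ≤ w i) (x : ι → α) (f : α → E) :
    ∫ y, f y ∂(∑ i ∈ s, ENNReal.ofReal (w i) • Measure.dirac (x i)) = ∑ i ∈ s, w i • f (x i) := by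
  rw [integral_finsetSum_measure fun i _ =>
    (integrable_dirac enorm_lt_top).smul_measure ENNReal.ofReal_ne_top]
  refine sum_congr rfl fun i hi => ?_
  rw [integral_smul_measure, integral_dirac, ENNReal.toReal_ofReal (hw i hi)]

theorem stmt_16_general (m : ℕ)
    (c : ℝ)
    (hc : c = (2 / ((m : ℝ) + 1)) *
      ∑ j ∈ (Finset.Icc 1 m).filter (fun j => Odd j), Real.cot (π * j / (2 * m + 2)))
    (μ : Measure ℝ)
    (hμ : μ = ∑ j ∈ (Finset.Icc 1 m).filter (fun j => Odd j),
        ENNReal.ofReal (2 / (((m : ℝ) + 1) * c) * Real.cot (π * j / (2 * m + 2))) •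
          Measure.dirac (π * j / (m + 1))) :
    ∀ k : ℕ, 1 ≤ k → k ≤ m → (∫ x, Real.sin (k * x) ∂μ) = 1 / c := by
  intro k hk hkm
  have hcot : ∀ j ∈ (Icc 1 m).filter Odd, 0 < cot (π * j / (2 * m + 2)) := fun j hj => by
    simp only [mem_filter, mem_Icc] at hj
    exact cot_pos_of_mem_Ioo (pi_mul_div_mem_Ioo hj.1.1 hj.1.2)
  have hc0 : 0 ≤ c := hc ▸ mul_nonneg (by positivity) (sum_nonneg fun j hj => (hcot j hj).le)
  rw [hμ, integral_finset_sum_smul_dirac _ _ fun j hj => by have := hcot j hj; positivity]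
  simp_rw [smul_eq_mul, mul_assoc, ← mul_sum, sum_filter_odd_cot_mul_sin hk hkm]
  field_simp

theorem stmt_16 (m : ℕ) (hm : 1 ≤ m)
    (c : ℝ)
    (hc : c = (2 / ((m : ℝ) + 1)) *
      ∑ j ∈ (Finset.Icc 1 m).filter (fun j => Odd j), Real.cot (π * j / (2 * m + 2)))
    (μ : Measure ℝ)
    (hμ : μ = ∑ j ∈ (Finset.Icc 1 m).filter (fun j => Odd j),
        ENNReal.ofReal (2 / (((m : ℝ) + 1) * c) * Real.cot (π * j / (2 * m + 2))) •
          Measure.dirac (π * j / (m + 1))) :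
    ∀ k : ℕ, 1 ≤ k → k ≤ m → (∫ x, Real.sin (k * x) ∂μ) = 1 / c :=
  stmt_16_general m c hc μ hμ
end

section
/- Let m be an odd positive integer and let F(x) = (1/(m+1))·(sin((m+1)x/2)/sin(x/2))² be the Fejér kernel. Then F(x) - F(x - π) is nonnegative for x ∈ [-π/2, π/2] and nonpositive for x ∈ [π/2, 3π/2]. -/
/-!
Because `m + 1` is even, shifting by `π` leaves `sin² ((m + 1) x / 2)` unchanged while turning
`sin² (x / 2)` into `cos² (x / 2)`; hence `F x · sin² (x / 2) = F (x - π) · cos² (x / 2)` for all `x`,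
also at the removable singularities. As `F ≥ 0`, comparing `F x` with `F (x - π)` reduces to comparing
`sin² (x / 2)` with `cos² (x / 2)`, whose difference is `-cos x`.
-/

open Real

noncomputable def fejer (n : ℕ) (x : ℝ) : ℝ :=
  if sin (x / 2) = 0 then (n : ℝ) + 1
  else (1 / ((n : ℝ) + 1)) * (sin ((n + 1) * x / 2) / sin (x / 2)) ^ 2

lemma sin_nat_mul_eq_zero {y : ℝ} (h : sin y = 0) (n : ℕ) : sin (n * y) = 0 := by
  obtain ⟨k, rfl⟩ := sin_eq_zero_iff.mp h
  simpa [mul_assoc] using sin_int_mul_pi (n * k)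

lemma fejer_nonneg (n : ℕ) (x : ℝ) : 0 ≤ fejer n x := by
  unfold fejer; split_ifs <;> positivity

lemma fejer_mul_sin_sq_half (n : ℕ) (x : ℝ) :
    fejer n x * sin (x / 2) ^ 2 = sin ((n + 1) * x / 2) ^ 2 / (n + 1) := by
  unfold fejer
  split_ifs with h
  · have := sin_nat_mul_eq_zero h (n + 1)
    push_cast at this
    rw [h, mul_div_assoc, this]; simp
  · field_simp

lemma sin_sq_sub_nat_mul_pi (x : ℝ) (k : ℕ) : sin (x - k * π) ^ 2 = sin x ^ 2 := by
  rw [sin_sub_nat_mul_pi, mul_pow, ← pow_mul, pow_mul', neg_one_sq, one_pow, one_mul]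

lemma fejer_sub_pi_mul_cos_sq_half {n : ℕ} (hn : Odd n) (x : ℝ) :
    fejer n (x - π) * cos (x / 2) ^ 2 = fejer n x * sin (x / 2) ^ 2 := by
  obtain ⟨k, rfl⟩ := hn
  have hhalf : sin ((x - π) / 2) ^ 2 = cos (x / 2) ^ 2 := by
    rw [sub_div, sin_sub_pi_div_two, neg_sq]
  have hshift : ((2 * k + 1 : ℕ) + 1 : ℝ) * (x - π) / 2
      = ((2 * k + 1 : ℕ) + 1) * x / 2 - (k + 1 : ℕ) * π := by
    push_cast; ring
  rw [← hhalf, fejer_mul_sin_sq_half, fejer_mul_sin_sq_half, hshift, sin_sq_sub_nat_mul_pi]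

lemma sin_sq_half_le_cos_sq_half {x : ℝ} (hx : 0 ≤ cos x) : sin (x / 2) ^ 2 ≤ cos (x / 2) ^ 2 := by
  have := cos_two_mul' (x / 2)
  rw [mul_div_cancel₀ x two_ne_zero] at this
  linarith

lemma cos_sq_half_le_sin_sq_half {x : ℝ} (hx : cos x ≤ 0) : cos (x / 2) ^ 2 ≤ sin (x / 2) ^ 2 := by
  have := cos_two_mul' (x / 2)
  rw [mul_div_cancel₀ x two_ne_zero] at this
  linarith

theorem stmt_17_general (m : ℕ) (hodd : Odd m)
    (F : ℝ → ℝ)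
    (hF : ∀ x : ℝ, F x = if Real.sin (x / 2) = 0 then (m : ℝ) + 1
      else (1 / ((m : ℝ) + 1)) * (Real.sin ((m + 1) * x / 2) / Real.sin (x / 2))^2) :
    (∀ x ∈ Set.Icc (-(π/2)) (π/2), 0 ≤ F x - F (x - π)) ∧
      (∀ x ∈ Set.Icc (π/2) (3*π/2), F x - F (x - π) ≤ 0) := by
  obtain rfl : F = fejer m := funext hF
  have hπ := pi_pos
  constructor
  · rintro x ⟨hx₁, hx₂⟩
    have hcos : 0 < cos (x / 2) ^ 2 :=
      pow_pos (cos_pos_of_mem_Ioo ⟨by linarith, by linarith⟩) 2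
    have hle := sin_sq_half_le_cos_sq_half (cos_nonneg_of_mem_Icc ⟨hx₁, hx₂⟩)
    refine sub_nonneg.2 (le_of_mul_le_mul_right ?_ hcos)
    rw [fejer_sub_pi_mul_cos_sq_half hodd]
    exact mul_le_mul_of_nonneg_left hle (fejer_nonneg m x)
  · rintro x ⟨hx₁, hx₂⟩
    have hsin : 0 < sin (x / 2) ^ 2 :=
      pow_pos (sin_pos_of_pos_of_lt_pi (by linarith) (by linarith)) 2
    have hle := cos_sq_half_le_sin_sq_half (cos_nonpos_of_pi_div_two_le_of_le hx₁ (by linarith))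
    refine sub_nonpos.2 (le_of_mul_le_mul_right ?_ hsin)
    rw [← fejer_sub_pi_mul_cos_sq_half hodd]
    exact mul_le_mul_of_nonneg_left hle (fejer_nonneg m (x - π))

theorem stmt_17 (m : ℕ) (hm : 1 ≤ m) (hodd : Odd m)
    (F : ℝ → ℝ)
    (hF : ∀ x : ℝ, F x = if Real.sin (x / 2) = 0 then (m : ℝ) + 1
      else (1 / ((m : ℝ) + 1)) * (Real.sin ((m + 1) * x / 2) / Real.sin (x / 2))^2) :
    (∀ x ∈ Set.Icc (-(π/2)) (π/2), 0 ≤ F x - F (x - π)) ∧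
      (∀ x ∈ Set.Icc (π/2) (3*π/2), F x - F (x - π) ≤ 0) :=
  stmt_17_general m hodd F hF
end

section
/- Let m be an even positive integer and F(x) = (1/(m+1))·(sin((m+1)x/2)/sin(x/2))² the Fejér kernel. Then 2F(x) - F(x - mπ/(m+1)) - F(x - (m+2)π/(m+1)) is nonnegative for x ∈ [-π/2 + π/(m+1), π/2 - π/(m+1)] and nonpositive for x ∈ [π/2 + π/(m+1), 3π/2 - π/(m+1)]. -/
open Real

/-! Put `N = m + 1` and `c = π / N`; the two shifted points are `x + c - π` and `x - c - π`.
Since `m` and `m + 2` are even, `sin² (N y / 2)` takes the same value `S²` at all three points,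
while `sin² (y / 2)` becomes `sin² (x / 2)`, `cos² ((x + c) / 2)` and `cos² ((x - c) / 2)`.
So the sign of `2 F x - F x₁ - F x₂` is decided by comparing these squares, and
`cos² ((x ± c) / 2) - sin² (x / 2) = cos (x ± c / 2) cos (c / 2)` has a fixed sign on each interval.
At a removable singularity `F` only exceeds the quotient formula, and there the numerator vanishes
as well, which is harmless in the direction needed on each interval. -/

noncomputable def fejerKernel (N x : ℝ) : ℝ :=
  if sin (x / 2) = 0 then N else 1 / N * (sin (N * x / 2) / sin (x / 2)) ^ 2

section FejerKernel

variable {N x : ℝ}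

theorem fejerKernel_of_sin_ne_zero (h : sin (x / 2) ≠ 0) :
    fejerKernel N x = sin (N * x / 2) ^ 2 / sin (x / 2) ^ 2 / N := by
  rw [fejerKernel, if_neg h, div_pow]
  ring

theorem div_le_fejerKernel (hN : 0 ≤ N) (x : ℝ) :
    sin (N * x / 2) ^ 2 / sin (x / 2) ^ 2 / N ≤ fejerKernel N x := by
  by_cases h : sin (x / 2) = 0
  · simp [fejerKernel, h, hN]
  · rw [fejerKernel_of_sin_ne_zero h]

theorem sin_mul_half_eq_zero_of_sin_half_eq_zero (n : ℕ) (h : sin (x / 2) = 0) :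
    sin (n * x / 2) = 0 := by
  obtain ⟨k, hk⟩ := sin_eq_zero_iff.mp h
  rw [show (n : ℝ) * x / 2 = ((n * k : ℤ) : ℝ) * π by push_cast; linear_combination (-n : ℝ) * hk]
  exact sin_int_mul_pi _

theorem sin_sq_mul_half_sub_even_mul_pi_div (hN : N ≠ 0) {j : ℕ} (hj : Even j) (x : ℝ) :
    sin (N * (x - j * π / N) / 2) ^ 2 = sin (N * x / 2) ^ 2 := by
  obtain ⟨k, rfl⟩ := hj
  rw [show N * (x - ↑(k + k) * π / N) / 2 = N * x / 2 - k * π by field_simp; push_cast; ring,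
    sin_sub_nat_mul_pi, mul_pow, ← pow_mul, mul_comm k 2, pow_mul, neg_one_sq, one_pow, one_mul]

end FejerKernel

theorem cos_sq_sub_sin_sq_eq_cos_add_mul_cos_sub (u v : ℝ) :
    cos u ^ 2 - sin v ^ 2 = cos (u + v) * cos (u - v) := by
  rw [cos_add, cos_sub]
  linear_combination sin v ^ 2 * sin_sq_add_cos_sq u - cos u ^ 2 * sin_sq_add_cos_sq v

theorem sin_sq_half_sub_pi (y : ℝ) : sin ((y - π) / 2) ^ 2 = cos (y / 2) ^ 2 := by
  rw [sub_div, sin_sub_pi_div_two, neg_sq]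

theorem cos_sq_half_add_sub_sin_sq_half (x c : ℝ) :
    cos ((x + c) / 2) ^ 2 - sin (x / 2) ^ 2 = cos (x + c / 2) * cos (c / 2) := by
  have h := cos_sq_sub_sin_sq_eq_cos_add_mul_cos_sub ((x + c) / 2) (x / 2)
  rwa [show (x + c) / 2 + x / 2 = x + c / 2 by ring, show (x + c) / 2 - x / 2 = c / 2 by ring] at h

theorem cos_sq_half_sub_sub_sin_sq_half (x c : ℝ) :
    cos ((x - c) / 2) ^ 2 - sin (x / 2) ^ 2 = cos (x - c / 2) * cos (c / 2) := by
  simpa [← sub_eq_add_neg, neg_div] using cos_sq_half_add_sub_sin_sq_half x (-c)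

theorem div_sq_le_div_sq {S a b : ℝ} (hab : a ^ 2 ≤ b ^ 2) (ha : a = 0 → S = 0) :
    S ^ 2 / b ^ 2 ≤ S ^ 2 / a ^ 2 := by
  rcases eq_or_ne a 0 with rfl | ha'
  · simp [ha rfl]
  · exact div_le_div_of_nonneg_left (sq_nonneg S) (by positivity) hab

theorem sin_sq_half_sub_mul_pi_div (m : ℕ) (x : ℝ) :
    sin ((x - m * π / (m + 1)) / 2) ^ 2 = cos ((x + π / (m + 1)) / 2) ^ 2 := by
  rw [← sin_sq_half_sub_pi]
  congr 3
  field_simp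
  ring

theorem sin_sq_half_sub_add_two_mul_pi_div (m : ℕ) (x : ℝ) :
    sin ((x - (m + 2) * π / (m + 1)) / 2) ^ 2 = cos ((x - π / (m + 1)) / 2) ^ 2 := by
  rw [← sin_sq_half_sub_pi]
  congr 3
  field_simp
  ring

theorem sin_sq_mul_half_sub_add_two_mul_pi_div {m : ℕ} (hm : Even m) (x : ℝ) :
    sin ((m + 1) * (x - (m + 2) * π / (m + 1)) / 2) ^ 2 = sin ((m + 1) * x / 2) ^ 2 := by
  simpa using sin_sq_mul_half_sub_even_mul_pi_div (N := m + 1) (by positivity) (hm.add even_two) x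

theorem fejer_numerator_eq_zero_of_denominator_eq_zero {m : ℕ} {y S a : ℝ}
    (hS : sin ((m + 1) * y / 2) ^ 2 = S ^ 2) (ha : sin (y / 2) ^ 2 = a ^ 2) (h : a = 0) : S = 0 := by
  have h₀ := sin_mul_half_eq_zero_of_sin_half_eq_zero (m + 1) (x := y) (by simpa [h] using ha)
  push_cast at h₀
  simpa [h₀] using hS.symm

noncomputable def fejerSecondDiff (m : ℕ) (x : ℝ) : ℝ :=
  2 * fejerKernel (m + 1) x - fejerKernel (m + 1) (x - m * π / (m + 1)) -
    fejerKernel (m + 1) (x - (m + 2) * π / (m + 1))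

section FejerSecondDiff

variable {m : ℕ} {x : ℝ}

theorem fejerSecondDiff_nonneg_of_sin_sq_le (hm : Even m)
    (hp : cos ((x + π / (m + 1)) / 2) ≠ 0) (hq : cos ((x - π / (m + 1)) / 2) ≠ 0)
    (hsp : sin (x / 2) ^ 2 ≤ cos ((x + π / (m + 1)) / 2) ^ 2)
    (hsq : sin (x / 2) ^ 2 ≤ cos ((x - π / (m + 1)) / 2) ^ 2) :
    0 ≤ fejerSecondDiff m x := by
  have hN : (0 : ℝ) < m + 1 := by positivity
  have hs₁ := sin_sq_half_sub_mul_pi_div m x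
  have hs₂ := sin_sq_half_sub_add_two_mul_pi_div m x
  have h₁ : sin ((x - m * π / (m + 1)) / 2) ≠ 0 := fun h ↦ hp (by simpa [h] using hs₁.symm)
  have h₂ : sin ((x - (m + 2) * π / (m + 1)) / 2) ≠ 0 := fun h ↦ hq (by simpa [h] using hs₂.symm)
  have hx := div_le_fejerKernel hN.le x
  have hSs := fejer_numerator_eq_zero_of_denominator_eq_zero (m := m) (y := x) rfl rfl
  rw [fejerSecondDiff, fejerKernel_of_sin_ne_zero h₁, fejerKernel_of_sin_ne_zero h₂, hs₁, hs₂,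
    sin_sq_mul_half_sub_even_mul_pi_div hN.ne' hm, sin_sq_mul_half_sub_add_two_mul_pi_div hm]
  have := div_le_div_of_nonneg_right (div_sq_le_div_sq hsp hSs) hN.le
  have := div_le_div_of_nonneg_right (div_sq_le_div_sq hsq hSs) hN.le
  linarith

theorem fejerSecondDiff_nonpos_of_cos_sq_le (hm : Even m) (hs : sin (x / 2) ≠ 0)
    (hps : cos ((x + π / (m + 1)) / 2) ^ 2 ≤ sin (x / 2) ^ 2)
    (hqs : cos ((x - π / (m + 1)) / 2) ^ 2 ≤ sin (x / 2) ^ 2) :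
    fejerSecondDiff m x ≤ 0 := by
  have hN : (0 : ℝ) < m + 1 := by positivity
  have hs₁ := sin_sq_half_sub_mul_pi_div m x
  have hs₂ := sin_sq_half_sub_add_two_mul_pi_div m x
  have hS₁ := sin_sq_mul_half_sub_even_mul_pi_div hN.ne' hm x
  have hS₂ := sin_sq_mul_half_sub_add_two_mul_pi_div hm x
  have h₁ := div_le_fejerKernel hN.le (x - m * π / (m + 1))
  have h₂ := div_le_fejerKernel hN.le (x - (m + 2) * π / (m + 1))
  rw [hS₁, hs₁] at h₁
  rw [hS₂, hs₂] at h₂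
  have hp := fejer_numerator_eq_zero_of_denominator_eq_zero hS₁ hs₁
  have hq := fejer_numerator_eq_zero_of_denominator_eq_zero hS₂ hs₂
  rw [fejerSecondDiff, fejerKernel_of_sin_ne_zero hs]
  have := div_le_div_of_nonneg_right (div_sq_le_div_sq hps hp) hN.le
  have := div_le_div_of_nonneg_right (div_sq_le_div_sq hqs hq) hN.le
  linarith

theorem fejerSecondDiff_nonneg (hm : Even m)
    (hx : x ∈ Set.Icc (-(π / 2) + π / (m + 1)) (π / 2 - π / (m + 1))) :
    0 ≤ fejerSecondDiff m x := by
  obtain ⟨hx₁, hx₂⟩ := hx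
  set c := π / (m + 1)
  have hc : 0 < c := by positivity
  have hcos : 0 < cos (c / 2) := cos_pos_of_mem_Ioo ⟨by linarith, by linarith⟩
  apply fejerSecondDiff_nonneg_of_sin_sq_le hm
  · exact (cos_pos_of_mem_Ioo ⟨by linarith, by linarith⟩).ne'
  · exact (cos_pos_of_mem_Ioo ⟨by linarith, by linarith⟩).ne'
  · rw [← sub_nonneg, cos_sq_half_add_sub_sin_sq_half]
    exact mul_nonneg (cos_nonneg_of_mem_Icc ⟨by linarith, by linarith⟩) hcos.le
  · rw [← sub_nonneg, cos_sq_half_sub_sub_sin_sq_half]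
    exact mul_nonneg (cos_nonneg_of_mem_Icc ⟨by linarith, by linarith⟩) hcos.le

theorem fejerSecondDiff_nonpos (hm : Even m)
    (hx : x ∈ Set.Icc (π / 2 + π / (m + 1)) (3 * π / 2 - π / (m + 1))) :
    fejerSecondDiff m x ≤ 0 := by
  obtain ⟨hx₁, hx₂⟩ := hx
  set c := π / (m + 1)
  have hc : 0 < c := by positivity
  have hcos : 0 < cos (c / 2) := cos_pos_of_mem_Ioo ⟨by linarith, by linarith⟩
  apply fejerSecondDiff_nonpos_of_cos_sq_le hm
  · exact (sin_pos_of_pos_of_lt_pi (by linarith) (by linarith)).ne'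
  · rw [← sub_nonpos, cos_sq_half_add_sub_sin_sq_half]
    exact mul_nonpos_of_nonpos_of_nonneg
      (cos_nonpos_of_pi_div_two_le_of_le (by linarith) (by linarith)) hcos.le
  · rw [← sub_nonpos, cos_sq_half_sub_sub_sin_sq_half]
    exact mul_nonpos_of_nonpos_of_nonneg
      (cos_nonpos_of_pi_div_two_le_of_le (by linarith) (by linarith)) hcos.le

end FejerSecondDiff

theorem stmt_18_general (m : ℕ) (heven : Even m)
    (F : ℝ → ℝ)
    (hF : ∀ x : ℝ, F x = if Real.sin (x / 2) = 0 then (m : ℝ) + 1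
      else (1 / ((m : ℝ) + 1)) * (Real.sin ((m + 1) * x / 2) / Real.sin (x / 2))^2) :
    (∀ x ∈ Set.Icc (-(π/2) + π/(m+1)) (π/2 - π/(m+1)),
        0 ≤ 2 * F x - F (x - m*π/(m+1)) - F (x - (m+2)*π/(m+1))) ∧
      (∀ x ∈ Set.Icc (π/2 + π/(m+1)) (3*π/2 - π/(m+1)),
        2 * F x - F (x - m*π/(m+1)) - F (x - (m+2)*π/(m+1)) ≤ 0) := by
  obtain rfl : F = fejerKernel (m + 1) := funext hF
  exact ⟨fun x hx ↦ fejerSecondDiff_nonneg heven hx, fun x hx ↦ fejerSecondDiff_nonpos heven hx⟩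

theorem stmt_18 (m : ℕ) (hm : 1 ≤ m) (heven : Even m)
    (F : ℝ → ℝ)
    (hF : ∀ x : ℝ, F x = if Real.sin (x / 2) = 0 then (m : ℝ) + 1
      else (1 / ((m : ℝ) + 1)) * (Real.sin ((m + 1) * x / 2) / Real.sin (x / 2))^2) :
    (∀ x ∈ Set.Icc (-(π/2) + π/(m+1)) (π/2 - π/(m+1)),
        0 ≤ 2 * F x - F (x - m*π/(m+1)) - F (x - (m+2)*π/(m+1))) ∧
      (∀ x ∈ Set.Icc (π/2 + π/(m+1)) (3*π/2 - π/(m+1)),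
        2 * F x - F (x - m*π/(m+1)) - F (x - (m+2)*π/(m+1)) ≤ 0) :=
  stmt_18_general m heven F hF
end
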